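/- arXiv:2311.01024 — 3 statements merged into one kernel-verified Lean document; each statement's English description precedes it below -/
import Mathlib

section
/- For every vertex o reachable from s, the final representation produced by the truncated Bellman–Ford iteration with offset δ aggregates exactly the walks whose length lies between dist(s,o) and dist(s,o)+δ; that is, yᶠ(o) = ∑_{t=dist(s,o)}^{dist(s,o)+δ} ∑_{p ∈ P_t(s,o)} weight(p), where P_t(s,o) denotes the set of walks of length t from s to o in G. -/
open Finset

/-- The weight of a walk: the product of the edge weights `wt v_{i-1} v_i` along the
walk, with the length-0 walk having weight 1. -/
def SimpleGraph.Walk.weight {V : Type*} {G : SimpleGraph V} {R : Type*} [CommSemiring R]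
    (wt : V → V → R) {u v : V} (p : G.Walk u v) : R :=
  (p.darts.map fun d => wt d.fst d.snd).prod

/-- `pathSum G wt t s o = ∑_{p ∈ P_t(s,o)} weight(p)`, the sum of the weights of all
walks of length `t` from `s` to `o` in `G`. -/
def pathSum {V : Type*} [Fintype V] [DecidableEq V] (G : SimpleGraph V) [DecidableRel G.Adj]
    {R : Type*} [CommSemiring R] (wt : V → V → R) (t : ℕ) (s o : V) : R :=
  ∑ p ∈ G.finsetWalkLength t s o, p.weight wt

open Classical in
/-- The truncated Bellman–Ford iterates `y_δ⁽ᵗ⁾` with source `s` and offset `δ`: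
`y⁽⁰⁾(o) = 1` if `o = s` and `0` otherwise; for `t ≥ 1`, if `o` is reachable from `s`
and `dist(s,o) ≤ t ≤ dist(s,o) + δ` then `o` aggregates, over the constrained edge set
(neighbors `u` reachable from `s` with `dist(s,u) < dist(s,o) + δ`), the messages
`y⁽ᵗ⁻¹⁾(u) * wt u o`, plus `y⁽⁰⁾(o)`; otherwise `y⁽ᵗ⁾(o) = y⁽ᵗ⁻¹⁾(o)`. -/
noncomputable def truncBF {V : Type*} [Fintype V] (G : SimpleGraph V)
    {R : Type*} [CommSemiring R] (wt : V → V → R) (s : V) (δ : ℕ) : ℕ → V → R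
  | 0 => fun o => if o = s then 1 else 0
  | (t + 1) => fun o =>
      if G.Reachable s o ∧ G.dist s o ≤ t + 1 ∧ t + 1 ≤ G.dist s o + δ then
        (∑ u ∈ Finset.univ.filter
            (fun u => G.Adj u o ∧ G.Reachable s u ∧ G.dist s u < G.dist s o + δ),
          truncBF G wt s δ t u * wt u o) + (if o = s then 1 else 0)
      else truncBF G wt s δ t o

/-! Induction on `t` shows `y⁽ᵗ⁾(o) = ∑_{k ≤ t} pathSum k s o` as long as `t ≤ dist(s,o) + δ`.
In an active round the last-edge recursion for walk sums turns the incoming messages into the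
walk sums of lengths `1, …, t`; the neighbours cut off by the truncation are unreachable or at
distance at least `dist(s,o) + δ ≥ t`, so they carry no walks of length `< t` anyway. In an
inactive round `t < dist(s,o)`, so the new walk sum is zero. Finally the terms with
`k < dist(s,o)` vanish. -/

namespace SimpleGraph.Walk

variable {V : Type*} {G : SimpleGraph V} {R : Type*} [CommSemiring R] (wt : V → V → R)

@[simp]
theorem weight_nil (u : V) : (nil : G.Walk u u).weight wt = 1 := rfl

theorem weight_cons {u v w : V} (h : G.Adj u v) (p : G.Walk v w) :
    (cons h p).weight wt = wt u v * p.weight wt := by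
  simp [weight]

theorem weight_reverse {u v : V} (p : G.Walk u v) :
    p.reverse.weight wt = p.weight (Function.swap wt) := by
  simp only [weight, darts_reverse, List.map_reverse, List.map_map, List.prod_reverse]
  rfl

end SimpleGraph.Walk

section PathSum

open SimpleGraph

variable {V : Type*} [Fintype V] [DecidableEq V] (G : SimpleGraph V) [DecidableRel G.Adj]
  {R : Type*} [CommSemiring R] (wt : V → V → R)

theorem pathSum_zero (s o : V) : pathSum G wt 0 s o = if o = s then 1 else 0 := by
  obtain rfl | h := eq_or_ne s o
  · simp [pathSum, finsetWalkLength]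
  · simp [pathSum, finsetWalkLength, h, h.symm]

theorem pathSum_swap (n : ℕ) (s o : V) :
    pathSum G (Function.swap wt) n o s = pathSum G wt n s o :=
  Finset.sum_nbij' Walk.reverse Walk.reverse (by simp [mem_finsetWalkLength_iff])
    (by simp [mem_finsetWalkLength_iff]) (by simp) (by simp)
    fun p _ => (p.weight_reverse wt).symm

theorem pathSum_succ_left (n : ℕ) (s o : V) :
    pathSum G wt (n + 1) s o = ∑ u ∈ G.neighborFinset s, wt s u * pathSum G wt n u o := by
  rw [pathSum, finsetWalkLength, Finset.sum_biUnion]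
  · rw [neighborFinset_def, ← Finset.sum_set_coe]
    refine Finset.sum_congr rfl fun u _ => ?_
    rw [Finset.sum_map, pathSum, Finset.mul_sum]
    exact Finset.sum_congr rfl fun p _ => Walk.weight_cons wt _ p
  · rintro ⟨u, hu⟩ - ⟨v, hv⟩ - huv
    simp only [Function.onFun, Finset.disjoint_left, Finset.mem_map]
    rintro _ ⟨p, -, rfl⟩ ⟨q, -, hq⟩
    cases hq
    exact huv rfl

theorem pathSum_succ (n : ℕ) (s o : V) :
    pathSum G wt (n + 1) s o = ∑ u ∈ univ.filter (G.Adj · o), pathSum G wt n s u * wt u o := by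
  rw [← pathSum_swap, pathSum_succ_left]
  refine Finset.sum_congr (by ext; simp [adj_comm]) fun u _ => ?_
  rw [pathSum_swap, mul_comm]

theorem pathSum_eq_zero_of_lt_dist {k : ℕ} {s o : V} (h : G.Reachable s o → k < G.dist s o) :
    pathSum G wt k s o = 0 :=
  Finset.sum_eq_zero fun p hp => by
    have := h p.reachable
    have := dist_le p
    rw [mem_finsetWalkLength_iff] at hp
    omega

theorem sum_range_pathSum_succ (n : ℕ) (s o : V) :
    ∑ u ∈ univ.filter (G.Adj · o), (∑ k ∈ range n, pathSum G wt k s u) * wt u o =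
      ∑ k ∈ range n, pathSum G wt (k + 1) s o := by
  simp only [pathSum_succ, Finset.sum_mul]
  exact Finset.sum_comm

end PathSum

section TruncBF

open SimpleGraph

variable {V : Type*} [Fintype V] [DecidableEq V] (G : SimpleGraph V) [DecidableRel G.Adj]
  {R : Type*} [CommSemiring R] (wt : V → V → R) (s : V) (δ : ℕ)

theorem truncBF_eq_sum_range_pathSum (t : ℕ) {o : V} (hr : G.Reachable s o)
    (ht : t ≤ G.dist s o + δ) :
    truncBF G wt s δ t o = ∑ k ∈ range (t + 1), pathSum G wt k s o := by
  induction t generalizing o with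
  | zero => simp [truncBF, pathSum_zero]
  | succ t ih =>
    by_cases hd : G.dist s o ≤ t + 1
    · simp only [truncBF]
      rw [filter_congr_decidable, if_pos ⟨hr, hd, ht⟩, sum_range_succ', ← sum_range_pathSum_succ,
        pathSum_zero]
      congr 1
      · refine (sum_congr rfl fun u hu => ?_).trans
          (sum_subset (fun u hu => ?_) fun u hu hu' => ?_)
        · obtain ⟨hadj, hru, -⟩ := (mem_filter.1 hu).2
          have := hadj.reachable.dist_triangle_right s
          rw [dist_eq_one_iff_adj.2 hadj] at this
          rw [ih hru (by omega)]
        · exact mem_filter.2 ⟨mem_univ u, (mem_filter.1 hu).2.1⟩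
        · refine mul_eq_zero_of_left (sum_eq_zero fun k hk => ?_) _
          refine pathSum_eq_zero_of_lt_dist G wt fun hru => ?_
          simp only [mem_filter, mem_univ, true_and, not_and, not_lt, mem_range] at hu hu' hk
          have := hu' hu hru
          omega
      · congr -- the two `if`s differ only in their `Decidable` instances
    · have hlt : t + 1 < G.dist s o := by omega
      simp only [truncBF]
      rw [if_neg (by tauto), ih hr (by omega), sum_range_succ _ (t + 1),
        pathSum_eq_zero_of_lt_dist G wt fun _ => hlt, add_zero]

end TruncBF

/-- For every vertex `o` reachable from `s`, the final representation
`yᶠ(o) = y⁽ᵈⁱˢᵗ⁽ˢ,ᵒ⁾⁺ᵟ⁾(o)` produced by the truncated Bellman–Ford iteration with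
offset `δ` aggregates exactly the walks of length between `dist(s,o)` and
`dist(s,o) + δ`: `yᶠ(o) = ∑_{t=dist(s,o)}^{dist(s,o)+δ} ∑_{p ∈ P_t(s,o)} weight(p)`. -/
theorem truncBF_final_eq_pathSum {V : Type*} [Fintype V] [DecidableEq V]
    (G : SimpleGraph V) [DecidableRel G.Adj] {R : Type*} [CommSemiring R]
    (wt : V → V → R) (s : V) (δ : ℕ) (o : V) (h : G.Reachable s o) :
    truncBF G wt s δ (G.dist s o + δ) o
      = ∑ t ∈ Finset.Icc (G.dist s o) (G.dist s o + δ), pathSum G wt t s o := by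
  rw [truncBF_eq_sum_range_pathSum G wt s δ _ h le_rfl,
    ← sum_range_add_sum_Ico _ (by omega : G.dist s o ≤ G.dist s o + δ + 1),
    Ico_add_one_right_eq_Icc,
    sum_eq_zero fun k hk => pathSum_eq_zero_of_lt_dist G wt fun _ => mem_range.1 hk, zero_add]
end

section
/- Selecting a target-specific offset is achieved by selecting a hidden representation: for every vertex o reachable from s and every k with 0 ≤ k ≤ δ̂, the hidden representation of o at iteration dist(s,o)+k under the truncated Bellman–Ford with offset δ̂ equals the final representation of o under the truncated Bellman–Ford run with offset k; that is, y_{δ̂}⁽ᵈⁱˢᵗ⁽ˢ'ᵒ⁾⁺ᵏ⁾(o) = y_{k}⁽ᵈⁱˢᵗ⁽ˢ'ᵒ⁾⁺ᵏ⁾(o). -/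
open Finset

/-- Before the shortest-path distance is reached the iterate is zero. -/
lemma truncBF_eq_zero_of_lt_dist {V : Type*} [Fintype V] (G : SimpleGraph V)
    {R : Type*} [CommSemiring R] (wt : V → V → R) (s : V) (δ : ℕ) :
    ∀ t (u : V), t < G.dist s u → truncBF G wt s δ t u = 0 := by
  intro t
  induction t with
  | zero =>
    intro u hu
    have hne : u ≠ s := by
      rintro rfl
      simp [SimpleGraph.dist_self] at hu
    simp [truncBF, hne]
  | succ t ih =>
    intro u hu
    have : ¬(G.Reachable s u ∧ G.dist s u ≤ t + 1 ∧ t + 1 ≤ G.dist s u + δ) := by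
      rintro ⟨-, h2, -⟩; omega
    simp only [truncBF]
    rw [if_neg this]
    exact ih u (by omega)

/-- If `t ≤ dist s o + δ'`, the iterate at time `t` is the same for any offset `δ ≥ δ'`. -/
lemma truncBF_offset_agree {V : Type*} [Fintype V] (G : SimpleGraph V)
    {R : Type*} [CommSemiring R] (wt : V → V → R) (s : V) :
    ∀ (t : ℕ) (o : V) (δ' δ : ℕ), δ' ≤ δ → G.Reachable s o → t ≤ G.dist s o + δ' →
      truncBF G wt s δ t o = truncBF G wt s δ' t o := by
  intro t
  induction t with
  | zero => intro o δ' δ _ _ _; rfl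
  | succ t ih =>
    intro o δ' δ hδ hro ht
    have key : ∀ u : V, G.Adj u o → G.Reachable s u → G.dist s o ≤ G.dist s u + 1 := by
      intro u hadj hru
      obtain ⟨p, hp⟩ := hru.exists_walk_length_eq_dist
      have := G.dist_le (p.concat hadj)
      rwa [SimpleGraph.Walk.length_concat, hp] at this
    by_cases hd : G.dist s o ≤ t + 1
    · have hc : G.Reachable s o ∧ G.dist s o ≤ t + 1 ∧ t + 1 ≤ G.dist s o + δ :=
        ⟨hro, hd, by omega⟩
      have hc' : G.Reachable s o ∧ G.dist s o ≤ t + 1 ∧ t + 1 ≤ G.dist s o + δ' :=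
        ⟨hro, hd, ht⟩
      simp only [truncBF]
      rw [if_pos hc, if_pos hc']
      congr 1
      classical
      have hsub : (Finset.univ.filter
          (fun u => G.Adj u o ∧ G.Reachable s u ∧ G.dist s u < G.dist s o + δ')) ⊆
          (Finset.univ.filter
          (fun u => G.Adj u o ∧ G.Reachable s u ∧ G.dist s u < G.dist s o + δ)) := by
        intro u hu
        simp only [Finset.mem_filter, Finset.mem_univ, true_and] at hu ⊢
        exact ⟨hu.1, hu.2.1, by omega⟩
      rw [← Finset.sum_subset hsub ?_]
      · apply Finset.sum_congr rfl
        intro u hu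
        simp only [Finset.mem_filter, Finset.mem_univ, true_and] at hu
        have := key u hu.1 hu.2.1
        rw [ih u δ' δ hδ hu.2.1 (by omega)]
      · intro u hu hnu
        simp only [Finset.mem_filter, Finset.mem_univ, true_and] at hu hnu
        have hlt : G.dist s o + δ' ≤ G.dist s u := by
          by_contra hcon
          exact hnu ⟨hu.1, hu.2.1, by omega⟩
        rw [truncBF_eq_zero_of_lt_dist G wt s δ t u (by omega), zero_mul]
    · have hc : ¬(G.Reachable s o ∧ G.dist s o ≤ t + 1 ∧ t + 1 ≤ G.dist s o + δ) := by
        rintro ⟨-, h2, -⟩; exact hd h2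
      have hc' : ¬(G.Reachable s o ∧ G.dist s o ≤ t + 1 ∧ t + 1 ≤ G.dist s o + δ') := by
        rintro ⟨-, h2, -⟩; exact hd h2
      simp only [truncBF]
      rw [if_neg hc, if_neg hc']
      exact ih o δ' δ hδ hro (by omega)

/-- Selecting a target-specific offset is achieved by selecting a
hidden representation: for every vertex `o` reachable from `s` and every `k ≤ δ̂`, the
hidden representation of `o` at iteration `dist(s,o) + k` under the truncated
Bellman–Ford with offset `δ̂` equals the final representation of `o` under the
truncated Bellman–Ford run with offset `k`. -/
theorem truncBF_hidden_eq_final_of_smaller_offset {V : Type*} [Fintype V] [DecidableEq V]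
    (G : SimpleGraph V) [DecidableRel G.Adj] {R : Type*} [CommSemiring R]
    (wt : V → V → R) (s : V) (δhat : ℕ) (o : V) (h : G.Reachable s o)
    (k : ℕ) (hk : k ≤ δhat) :
    truncBF G wt s δhat (G.dist s o + k) o = truncBF G wt s k (G.dist s o + k) o :=
  truncBF_offset_agree G wt s (G.dist s o + k) o k δhat hk h le_rfl
end

section
/- The message complexity of the truncated propagation is independent of the number of layers: for every number of layers T ≥ 1, the total number of messages aggregated, ∑_{o ∈ V} ∑_{t=1}^{T} |C(s,o,t)|, is at most (δ+1) · ∑_{o ∈ V} deg_G(o), where deg_G(o) is the degree of o in G. In particular each node is updated, and each of its incident edges aggregated, at most δ+1 times regardless of T. -/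
open Classical in
/-- The constrained edge set `C(s,o,t)` of the truncated Bellman–Ford: if `o` is
reachable from `s` and `dist(s,o) ≤ t ≤ dist(s,o) + δ`, it consists of the neighbors
`u` of `o` that are reachable from `s` with `dist(s,u) < dist(s,o) + δ`; otherwise it
is empty. -/
noncomputable def constraintSet {V : Type*} [Fintype V] (G : SimpleGraph V)
    (s : V) (δ : ℕ) (o : V) (t : ℕ) : Finset V :=
  if G.Reachable s o ∧ G.dist s o ≤ t ∧ t ≤ G.dist s o + δ then
    Finset.univ.filter (fun u => G.Adj u o ∧ G.Reachable s u ∧ G.dist s u < G.dist s o + δ)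
  else ∅

/-- The message complexity of the truncated propagation is
independent of the number of layers: for every number of layers `T ≥ 1`, the total
number of messages aggregated, `∑_{o ∈ V} ∑_{t=1}^{T} |C(s,o,t)|`, is at most
`(δ + 1) · ∑_{o ∈ V} deg_G(o)`. -/
theorem total_messages_le {V : Type*} [Fintype V] (G : SimpleGraph V)
    [DecidableRel G.Adj] (s : V) (δ : ℕ) (T : ℕ) (hT : 1 ≤ T) :
    ∑ o : V, ∑ t ∈ Finset.Icc 1 T, (constraintSet G s δ o t).card
      ≤ (δ + 1) * ∑ o : V, G.degree o := by
  classical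
  rw [Finset.mul_sum]
  apply Finset.sum_le_sum
  intro o _
  have h1 : ∀ t : ℕ, (constraintSet G s δ o t).card ≤
      if G.dist s o ≤ t ∧ t ≤ G.dist s o + δ then G.degree o else 0 := by
    intro t
    unfold constraintSet
    split_ifs with h h2 h2
    · apply le_trans (Finset.card_le_card ?_) (le_of_eq (G.card_neighborFinset_eq_degree o))
      intro u hu
      simp only [Finset.mem_filter] at hu
      exact (SimpleGraph.mem_neighborFinset G o u).mpr hu.2.1.symm
    · exact absurd ⟨h.2.1, h.2.2⟩ h2
    · simp
    · simp
  calc ∑ t ∈ Finset.Icc 1 T, (constraintSet G s δ o t).card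
      ≤ ∑ t ∈ Finset.Icc 1 T,
          (if G.dist s o ≤ t ∧ t ≤ G.dist s o + δ then G.degree o else 0) :=
        Finset.sum_le_sum fun t _ => h1 t
    _ = ∑ t ∈ (Finset.Icc 1 T).filter
          (fun t => G.dist s o ≤ t ∧ t ≤ G.dist s o + δ), G.degree o := by
        rw [Finset.sum_filter]
    _ ≤ ∑ t ∈ Finset.Icc (G.dist s o) (G.dist s o + δ), G.degree o := by
        apply Finset.sum_le_sum_of_subset
        intro t ht
        simp only [Finset.mem_filter, Finset.mem_Icc] at *
        exact ⟨ht.2.1, ht.2.2⟩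
    _ = (δ + 1) * G.degree o := by
        rw [Finset.sum_const, Nat.card_Icc, smul_eq_mul]
        congr 1
        omega
end
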